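/- arXiv:1612.00943 — 3 statements merged into one kernel-verified Lean document; each statement's English description precedes it below -/
import Mathlib

section
/- Let G be a finite simple connected graph with A(G) ≠ ∅. If md(G*) ≤ 1, then mc(G) = 2. -/
set_option linter.unusedSectionVars false
set_option maxHeartbeats 1000000


variable {V : Type*}

/-- The set of vertices covered by a set of edges. -/
def edgeCover (M : Finset (Sym2 V)) : Set V := {v | ∃ e ∈ M, v ∈ e}

/-- `M` is a matching of `G`: a set of pairwise disjoint edges of `G`. -/
def IsMatchingSet (G : SimpleGraph V) (M : Finset (Sym2 V)) : Prop :=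
  (∀ e ∈ M, e ∈ G.edgeSet) ∧
    ∀ e ∈ M, ∀ f ∈ M, e ≠ f → ∀ v : V, v ∈ e → v ∉ f

/-- `M` is a maximum matching of `G`. -/
def IsMaximumMatchingSet (G : SimpleGraph V) (M : Finset (Sym2 V)) : Prop :=
  IsMatchingSet G M ∧ ∀ N : Finset (Sym2 V), IsMatchingSet G N → N.card ≤ M.card

variable [Fintype V] [DecidableEq V]

/-- `M` is a `k`-matching cover of `G`: a union of `k` matchings of `G` covering `V(G)`. -/
def IsKMatchingCover (G : SimpleGraph V) (k : ℕ) (M : Finset (Sym2 V)) : Prop :=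
  (∃ f : Fin k → Finset (Sym2 V), (∀ i, IsMatchingSet G (f i)) ∧
      M = Finset.univ.biUnion f) ∧
    ∀ v : V, v ∈ edgeCover M

/-- The matching cover number `mc(G)`. -/
noncomputable def mc (G : SimpleGraph V) : ℕ :=
  sInf {k | ∃ M : Finset (Sym2 V), IsKMatchingCover G k M}

/-- `M` is a `k`-matching `D`-cover of `G`: a union of `k` matchings of `G` covering `D`. -/
def IsKMatchingDCover (G : SimpleGraph V) (D : Set V) (k : ℕ)
    (M : Finset (Sym2 V)) : Prop :=
  (∃ f : Fin k → Finset (Sym2 V), (∀ i, IsMatchingSet G (f i)) ∧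
      M = Finset.univ.biUnion f) ∧
    ∀ v ∈ D, v ∈ edgeCover M

/-- The matching `D`-cover number `md(G)`. -/
noncomputable def md (G : SimpleGraph V) (D : Set V) : ℕ :=
  sInf {k | ∃ M : Finset (Sym2 V), IsKMatchingDCover G D k M}

/-- The Gallai–Edmonds set `D(G)`: vertices missed by some maximum matching. -/
def Dset (G : SimpleGraph V) : Set V :=
  {v | ∃ M : Finset (Sym2 V), IsMaximumMatchingSet G M ∧ v ∉ edgeCover M}

/-- The Gallai–Edmonds set `A(G) = N_G(D(G))`. -/
def Aset (G : SimpleGraph V) : Set V :=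
  {v | v ∉ Dset G ∧ ∃ u ∈ Dset G, G.Adj u v}

/-- The Gallai–Edmonds set `C(G) = V(G) \ (A(G) ∪ D(G))`. -/
def Cset (G : SimpleGraph V) : Set V :=
  {v | v ∉ Dset G ∧ v ∉ Aset G}

/-- The induced subgraph `G[s]`, viewed as a graph on the same vertex type. -/
def indOn (G : SimpleGraph V) (s : Set V) : SimpleGraph V where
  Adj a b := a ∈ s ∧ b ∈ s ∧ G.Adj a b
  symm := ⟨by rintro a b ⟨ha, hb, h⟩; exact ⟨hb, ha, h.symm⟩⟩
  loopless := ⟨by rintro a ⟨-, -, h⟩; exact G.ne_of_adj h rfl⟩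

/-- `D*`: the set of isolated vertices of `G[D(G)]`. -/
def DstarSet (G : SimpleGraph V) : Set V :=
  {v | v ∈ Dset G ∧ ∀ u : V, ¬ (indOn G (Dset G)).Adj v u}

/-- The bipartite graph `G*`, obtained from `G` by deleting the nontrivial components of
`G[D(G)]`, the vertices of `C(G)`, and the edges spanned by `A(G)`: its edges are exactly
the edges of `G` joining `A(G)` and `D*`. -/
def Gstar (G : SimpleGraph V) : SimpleGraph V where
  Adj a b := G.Adj a b ∧
    ((a ∈ Aset G ∧ b ∈ DstarSet G) ∨ (a ∈ DstarSet G ∧ b ∈ Aset G))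
  symm := ⟨by rintro a b ⟨h, hc⟩; exact ⟨h.symm, by tauto⟩⟩
  loopless := ⟨by rintro a ⟨h, -⟩; exact G.ne_of_adj h rfl⟩

open Classical in
/-- The degree of `v` in the edge set `M`; this is the degree of `v` in `G[M]+A`
(vertices not covered by `M` have degree `0`). -/
noncomputable def degM (M : Finset (Sym2 V)) (v : V) : ℕ :=
  (M.filter fun e => v ∈ e).card

/-- The maximum degree `Δ(G[M]+A)`. -/
noncomputable def maxDegPlus (M : Finset (Sym2 V)) : ℕ :=
  Finset.univ.sup fun v : V => degM M v

/-- `w` is a maximum center of `M` (all vertices of `A` being regarded as centers). -/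
def IsMaximumCenter (A : Set V) (M : Finset (Sym2 V)) (w : V) : Prop :=
  w ∈ A ∧ degM M w = maxDegPlus M

/-- `(A, D)` is a bipartition of `G`. -/
def IsBipartition (G : SimpleGraph V) (A D : Set V) : Prop :=
  Disjoint A D ∧ A ∪ D = Set.univ ∧
    ∀ a b : V, G.Adj a b → (a ∈ A ∧ b ∈ D) ∨ (a ∈ D ∧ b ∈ A)

/-- A matching `D`-cover of `G`, recorded as an edge set
(a union of matchings of `G` covering `D`). -/
def IsMDCoverSet (G : SimpleGraph V) (D : Set V) (M : Finset (Sym2 V)) : Prop :=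
  ∃ k, IsKMatchingDCover G D k M

/-- A minimal matching `D`-cover: no proper subset is a matching `D`-cover. -/
def IsMinimalMDCover (G : SimpleGraph V) (D : Set V) (M : Finset (Sym2 V)) : Prop :=
  IsMDCoverSet G D M ∧ ∀ M' ⊂ M, ¬ IsMDCoverSet G D M'

/-- The graph `G[M]` spanned by an edge set, on the same vertex type. -/
def fromEdges (M : Finset (Sym2 V)) : SimpleGraph V where
  Adj a b := a ≠ b ∧ s(a, b) ∈ M
  symm := ⟨by rintro a b ⟨hne, h⟩; exact ⟨hne.symm, by rwa [Sym2.eq_swap]⟩⟩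
  loopless := ⟨by rintro a ⟨hne, -⟩; exact hne rfl⟩

/-- The connected component of `v` in `G[M]` is a star with center `c`:
every vertex of the component is `c` or a neighbour of `c`, and every edge of the
component is incident with `c`. -/
def StarCenteredAt (M : Finset (Sym2 V)) (c v : V) : Prop :=
  (fromEdges M).Reachable c v ∧
    (∀ u : V, (fromEdges M).Reachable u v → u = c ∨ (fromEdges M).Adj c u) ∧
    ∀ e ∈ M, (∃ x, x ∈ e ∧ (fromEdges M).Reachable x v) → c ∈ e

/-- Every component of `G[M]` is a star whose center lies in `A`. -/
def CentersInA (A : Set V) (M : Finset (Sym2 V)) : Prop :=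
  ∀ v ∈ edgeCover M, ∃ c ∈ A, StarCenteredAt M c v

/-- `w` is an `M`-switching path: an `M`-alternating path (starting at a maximum center
with an edge of `M`, vertices alternately centers in `A` and ends, edges alternately in
`M` and outside `M`) ending at a center `v` with `d(u) ≥ d(v) + 2`. -/
def IsSwitchingPath (G : SimpleGraph V) (A : Set V) (M : Finset (Sym2 V))
    (n : ℕ) (w : Fin (n + 1) → V) : Prop :=
  0 < n ∧ Function.Injective w ∧
    (∀ i : Fin n, G.Adj (w i.castSucc) (w i.succ)) ∧
    (∀ i : Fin n, (s(w i.castSucc, w i.succ) ∈ M ↔ Even (i : ℕ))) ∧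
    (∀ i : Fin (n + 1), w i ∈ A ↔ Even (i : ℕ)) ∧
    w (Fin.last n) ∈ A ∧
    IsMaximumCenter A M (w 0) ∧
    degM M (w (Fin.last n)) + 2 ≤ degM M (w 0)

/-- There is an `M`-switching path from `u` to `v` in `G`. -/
def ExistsSwitchingPath (G : SimpleGraph V) (A : Set V) (M : Finset (Sym2 V))
    (u v : V) : Prop :=
  ∃ (n : ℕ) (w : Fin (n + 1) → V),
    IsSwitchingPath G A M n w ∧ w 0 = u ∧ w (Fin.last n) = v

/-- The edge set of the path `w 0, w 1, …, w n`. -/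
def pathEdges (n : ℕ) (w : Fin (n + 1) → V) : Finset (Sym2 V) :=
  Finset.univ.image fun i : Fin n => s(w i.castSucc, w i.succ)

section helpers
variable [DecidableEq V] {G : SimpleGraph V} {M : Finset (Sym2 V)} {e f : Sym2 V} {a b v : V}

lemma matching_subset (h : IsMatchingSet G M) {N : Finset (Sym2 V)} (hs : N ⊆ M) :
    IsMatchingSet G N :=
  ⟨fun e he => h.1 e (hs he), fun e he f hf => h.2 e (hs he) f (hs hf)⟩

lemma matching_unique (hM : IsMatchingSet G M) (he : e ∈ M) (hf : f ∈ M)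
    (hv : v ∈ e) (hv' : v ∈ f) : e = f := by
  by_contra h; exact hM.2 e he f hf h v hv hv'

lemma matching_edge (hM : IsMatchingSet G M) (he : e ∈ M) (hv : v ∈ e) :
    ∃ x, e = s(v, x) ∧ G.Adj v x := by
  obtain ⟨x, rfl⟩ := Sym2.mem_iff_exists.mp hv
  exact ⟨x, rfl, G.mem_edgeSet.mp (hM.1 _ he)⟩

lemma not_cover_iff : v ∉ edgeCover M ↔ ∀ e ∈ M, v ∉ e := by
  simp [edgeCover]

lemma matching_insert (hM : IsMatchingSet G M) (hab : G.Adj a b)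
    (ha : ∀ f ∈ M, a ∉ f) (hb : ∀ f ∈ M, b ∉ f) :
    IsMatchingSet G (insert s(a,b) M) ∧ (insert s(a,b) M).card = M.card + 1 := by
  have hnm : s(a,b) ∉ M := fun h => ha _ h (Sym2.mem_mk_left a b)
  refine ⟨⟨?_, ?_⟩, Finset.card_insert_of_notMem hnm⟩
  · intro e he
    rcases Finset.mem_insert.mp he with rfl | he
    · exact G.mem_edgeSet.mpr hab
    · exact hM.1 e he
  · intro e he f hf hef v hv hvf
    rcases Finset.mem_insert.mp he with rfl | he2
    · rcases Finset.mem_insert.mp hf with rfl | hf2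
      · exact hef rfl
      · rcases Sym2.mem_iff.mp hv with rfl | rfl
        · exact ha f hf2 hvf
        · exact hb f hf2 hvf
    · rcases Finset.mem_insert.mp hf with rfl | hf2
      · rcases Sym2.mem_iff.mp hvf with rfl | rfl
        · exact ha e he2 hv
        · exact hb e he2 hv
      · exact hM.2 e he2 f hf2 hef v hv hvf

lemma matching_swap (hM : IsMatchingSet G M) (he : e ∈ M) (hab : G.Adj a b)
    (ha : ∀ f ∈ M.erase e, a ∉ f) (hb : ∀ f ∈ M.erase e, b ∉ f) :
    IsMatchingSet G (insert s(a,b) (M.erase e)) ∧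
      (insert s(a,b) (M.erase e)).card = M.card := by
  obtain ⟨h1, h2⟩ := matching_insert (matching_subset hM (Finset.erase_subset e M)) hab ha hb
  exact ⟨h1, by rw [h2, Finset.card_erase_add_one he]⟩

lemma exchange_lemma (G : SimpleGraph V) :
    ∀ (n : ℕ) (M M' : Finset (Sym2 V)),
    IsMaximumMatchingSet G M → IsMaximumMatchingSet G M' → (M \ M').card ≤ n →
    ∀ w : V, w ∉ edgeCover M' →
    ∃ Ms : Finset (Sym2 V), IsMaximumMatchingSet G Ms ∧
      (∀ e ∈ M, e ∈ M' → e ∈ Ms) ∧ w ∉ edgeCover Ms ∧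
      ∃ t : V, ∀ v : V, v ∉ edgeCover M → v ≠ t → v ∉ edgeCover Ms := by
  intro n
  induction n with
  | zero =>
    intro M M' hM hM' hn w hw
    have hsub : M ⊆ M' := by
      rw [← Finset.sdiff_eq_empty_iff_subset]
      exact Finset.card_eq_zero.mp (Nat.le_zero.mp hn)
    refine ⟨M, hM, fun e he _ => he, ?_, w, fun v hv _ => hv⟩
    rintro ⟨e, he, hwe⟩
    exact hw ⟨e, hsub he, hwe⟩
  | succ n ih =>
    intro M M' hM hM' hn w hw
    by_cases hwM : w ∈ edgeCover M
    case neg => exact ⟨M, hM, fun e he _ => he, hwM, w, fun v hv _ => hv⟩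
    obtain ⟨e, he, hwe⟩ := hwM
    obtain ⟨x, rfl, hadj_wx⟩ := matching_edge hM.1 he hwe
    have hwx : w ≠ x := hadj_wx.ne
    have hxe : x ∈ s(w, x) := Sym2.mem_mk_right w x
    have henotM' : s(w,x) ∉ M' := fun h => hw ⟨_, h, hwe⟩
    by_cases hx : x ∈ edgeCover M'
    case neg =>
      exfalso
      obtain ⟨h1, h2⟩ := matching_insert hM'.1 hadj_wx
        (not_cover_iff.mp hw) (not_cover_iff.mp hx)
      have := hM'.2 _ h1
      omega
    obtain ⟨f, hf, hxf⟩ := hx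
    obtain ⟨y, rfl, hadj_xy⟩ := matching_edge hM'.1 hf hxf
    have hxy : x ≠ y := hadj_xy.ne
    have hyf : y ∈ s(x, y) := Sym2.mem_mk_right x y
    have hyw : y ≠ w := by
      rintro rfl
      exact hw ⟨_, hf, hyf⟩
    have hfnotM : s(x,y) ∉ M := by
      intro h
      have hef : s(w,x) = s(x,y) := matching_unique hM.1 he h hxe hxf
      have : w ∈ s(x,y) := hef ▸ hwe
      rcases Sym2.mem_iff.mp this with rfl | rfl
      · exact hwx rfl
      · exact hyw rfl
    by_cases hy : y ∈ edgeCover M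
    case neg =>
      -- terminal flip on M
      have hax : ∀ g ∈ M.erase s(w,x), x ∉ g := by
        intro g hg hxg
        exact Finset.ne_of_mem_erase hg
          (matching_unique hM.1 (Finset.mem_of_mem_erase hg) he hxg hxe)
      obtain ⟨hm, hc⟩ := matching_swap hM.1 he hadj_xy hax
        (fun g hg => not_cover_iff.mp hy g (Finset.mem_of_mem_erase hg))
      refine ⟨_, ⟨hm, fun N hN => (hM.2 N hN).trans_eq hc.symm⟩, ?_, ?_, y, ?_⟩
      · intro g hgM hgM'
        have hge : g ≠ s(w,x) := fun h => henotM' (h ▸ hgM')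
        exact Finset.mem_insert_of_mem (Finset.mem_erase.mpr ⟨hge, hgM⟩)
      · rintro ⟨g, hg, hwg⟩
        rcases Finset.mem_insert.mp hg with rfl | hg2
        · rcases Sym2.mem_iff.mp hwg with rfl | rfl
          · exact hwx rfl
          · exact hyw rfl
        · exact Finset.ne_of_mem_erase hg2
            (matching_unique hM.1 (Finset.mem_of_mem_erase hg2) he hwg hwe)
      · rintro v hv hvy ⟨g, hg, hvg⟩
        rcases Finset.mem_insert.mp hg with rfl | hg2
        · rcases Sym2.mem_iff.mp hvg with rfl | rfl
          · exact hv ⟨_, he, hxe⟩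
          · exact hvy rfl
        · exact hv ⟨g, Finset.mem_of_mem_erase hg2, hvg⟩
    -- main recursive case
    obtain ⟨g, hg, hyg⟩ := hy
    have hge : g ≠ s(w,x) := by
      rintro rfl
      rcases Sym2.mem_iff.mp hyg with rfl | rfl
      · exact hyw rfl
      · exact hxy rfl
    have hgnotM' : g ∉ M' := by
      intro h
      exact hfnotM ((matching_unique hM'.1 h hf hyg hyf) ▸ hg)
    -- M'* := insert s(w,x) (M'.erase s(x,y))
    have hax' : ∀ h ∈ M'.erase s(x,y), x ∉ h := by
      intro h hh hxh
      exact Finset.ne_of_mem_erase hh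
        (matching_unique hM'.1 (Finset.mem_of_mem_erase hh) hf hxh hxf)
    obtain ⟨hm', hc'⟩ := matching_swap hM'.1 hf hadj_wx
      (fun h hh => not_cover_iff.mp hw h (Finset.mem_of_mem_erase hh)) hax'
    set M'star := insert s(w,x) (M'.erase s(x,y)) with hM'star
    have hmax' : IsMaximumMatchingSet G M'star :=
      ⟨hm', fun N hN => (hM'.2 N hN).trans_eq hc'.symm⟩
    have hynot : y ∉ edgeCover M'star := by
      rintro ⟨h, hh, hyh⟩
      rcases Finset.mem_insert.mp hh with rfl | hh2
      · rcases Sym2.mem_iff.mp hyh with rfl | rfl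
        · exact hyw rfl
        · exact hxy rfl
      · exact Finset.ne_of_mem_erase hh2
          (matching_unique hM'.1 (Finset.mem_of_mem_erase hh2) hf hyh hyf)
    have hmeas : (M \ M'star).card ≤ n := by
      have hsub : M \ M'star ⊆ (M \ M').erase s(w,x) := by
        intro m hm
        obtain ⟨hmM, hmnot⟩ := Finset.mem_sdiff.mp hm
        have hme : m ≠ s(w,x) := by
          rintro rfl; exact hmnot (Finset.mem_insert_self _ _)
        refine Finset.mem_erase.mpr ⟨hme, Finset.mem_sdiff.mpr ⟨hmM, fun hmM' => ?_⟩⟩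
        have hmf : m ≠ s(x,y) := fun h => hfnotM (h ▸ hmM)
        exact hmnot (Finset.mem_insert_of_mem (Finset.mem_erase.mpr ⟨hmf, hmM'⟩))
      have h1 : ((M \ M').erase s(w,x)).card = (M \ M').card - 1 :=
        Finset.card_erase_of_mem (Finset.mem_sdiff.mpr ⟨he, henotM'⟩)
      have h2 := Finset.card_le_card hsub
      omega
    obtain ⟨M₁, hM₁, hcom₁, hy₁, t, ht₁⟩ := ih M M'star hM hmax' hmeas y hynot
    have heM₁ : s(w,x) ∈ M₁ := hcom₁ _ he (Finset.mem_insert_self _ _)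
    have hax₁ : ∀ h ∈ M₁.erase s(w,x), x ∉ h := by
      intro h hh hxh
      exact Finset.ne_of_mem_erase hh
        (matching_unique hM₁.1 (Finset.mem_of_mem_erase hh) heM₁ hxh hxe)
    obtain ⟨hm₂, hc₂⟩ := matching_swap hM₁.1 heM₁ hadj_xy hax₁
      (fun h hh => not_cover_iff.mp hy₁ h (Finset.mem_of_mem_erase hh))
    refine ⟨_, ⟨hm₂, fun N hN => (hM₁.2 N hN).trans hc₂.symm.le⟩, ?_, ?_, t, ?_⟩
    · intro m hmM hmM'
      have hmf : m ≠ s(x,y) := fun h => hfnotM (h ▸ hmM)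
      have hmstar : m ∈ M'star :=
        Finset.mem_insert_of_mem (Finset.mem_erase.mpr ⟨hmf, hmM'⟩)
      have hmM₁ : m ∈ M₁ := hcom₁ m hmM hmstar
      have hme : m ≠ s(w,x) := fun h => henotM' (h ▸ hmM')
      exact Finset.mem_insert_of_mem (Finset.mem_erase.mpr ⟨hme, hmM₁⟩)
    · rintro ⟨h, hh, hwh⟩
      rcases Finset.mem_insert.mp hh with rfl | hh2
      · rcases Sym2.mem_iff.mp hwh with rfl | rfl
        · exact hwx rfl
        · exact hyw rfl
      · exact Finset.ne_of_mem_erase hh2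
          (matching_unique hM₁.1 (Finset.mem_of_mem_erase hh2) heM₁ hwh hwe)
    · rintro v hv hvt ⟨h, hh, hvh⟩
      rcases Finset.mem_insert.mp hh with rfl | hh2
      · rcases Sym2.mem_iff.mp hvh with rfl | rfl
        · exact hv ⟨_, he, hxe⟩
        · exact hv ⟨g, hg, hyg⟩
      · exact ht₁ v hv hvt ⟨h, Finset.mem_of_mem_erase hh2, hvh⟩

end helpers

section mainproof
variable [Fintype V] [DecidableEq V]
variable {G : SimpleGraph V} {M : Finset (Sym2 V)} {u u' v w : V}

lemma not_adj_exposed (hM : IsMaximumMatchingSet G M) (hu : u ∉ edgeCover M)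
    (hv : v ∉ edgeCover M) (h : G.Adj u v) : False := by
  obtain ⟨hmatch, hc⟩ := matching_insert hM.1 h (not_cover_iff.mp hu) (not_cover_iff.mp hv)
  have := hM.2 _ hmatch
  omega

/-- KEY: two distinct exposed vertices of a maximum matching have no common
neighbour in `D(G)`. -/
lemma key_lemma (hM : IsMaximumMatchingSet G M) (hu : u ∉ edgeCover M)
    (hu' : u' ∉ edgeCover M) (hne : u ≠ u') (hw : w ∈ Dset G)
    (h1 : G.Adj u w) (h2 : G.Adj u' w) : False := by
  obtain ⟨M', hM', hwM'⟩ := hw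
  obtain ⟨Ms, hMs, _, hwMs, t, ht⟩ :=
    exchange_lemma G (M \ M').card M M' hM hM' le_rfl w hwM'
  by_cases htu : t = u
  · exact not_adj_exposed hMs (ht u' hu' (htu ▸ hne.symm)) hwMs h2
  · exact not_adj_exposed hMs (ht u hu (fun h => htu h.symm)) hwMs h1

lemma exists_max_matching (G : SimpleGraph V) :
    ∃ M : Finset (Sym2 V), IsMaximumMatchingSet G M := by
  classical
  have hne : (Finset.univ.filter (fun N : Finset (Sym2 V) => IsMatchingSet G N)).Nonempty :=
    ⟨∅, Finset.mem_filter.mpr ⟨Finset.mem_univ _,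
      ⟨fun e he => by simp at he, fun e he => by simp at he⟩⟩⟩
  obtain ⟨M, hMmem, hMmax⟩ := Finset.exists_max_image _ (fun N => N.card) hne
  rw [Finset.mem_filter] at hMmem
  refine ⟨M, hMmem.2, fun N hN => hMmax N ?_⟩
  simp [Finset.mem_filter, hN]

lemma cover_card [DecidablePred (fun v : V => v ∈ edgeCover M)] (hM : IsMatchingSet G M) :
    (Finset.univ.filter (fun v : V => v ∈ edgeCover M)).card = 2 * M.card := by
  classical
  have hrw : Finset.univ.filter (fun v : V => v ∈ edgeCover M) =
      M.biUnion (fun e => Finset.univ.filter (fun v : V => v ∈ e)) := by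
    ext v; rw [Finset.mem_filter, Finset.mem_biUnion]; simp [edgeCover, Set.mem_setOf_eq]
  have hdisj : ∀ e ∈ M, ∀ f ∈ M, e ≠ f →
      Disjoint (Finset.univ.filter (fun v : V => v ∈ e))
        (Finset.univ.filter (fun v : V => v ∈ f)) := by
    intro e he f hf hef
    rw [Finset.disjoint_left]
    intro v hv hv'
    rw [Finset.mem_filter] at hv hv'
    exact hM.2 e he f hf hef v hv.2 hv'.2
  have hcard : ∀ e ∈ M, (Finset.univ.filter (fun v : V => v ∈ e)).card = 2 := by
    intro e he
    obtain ⟨a, b⟩ := e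
    have hab : a ≠ b := (G.mem_edgeSet.mp (hM.1 _ he)).ne
    have hset : Finset.univ.filter (fun v : V => v ∈ s(a,b)) = {a, b} := by
      ext v; simp [Sym2.mem_iff]
    rw [hset, Finset.card_pair hab]
  rw [hrw, Finset.card_biUnion hdisj, Finset.sum_congr rfl hcard,
    Finset.sum_const, smul_eq_mul, mul_comm]

end mainproof
/-- If `A(G) ≠ ∅` and `md(G*) ≤ 1`, then `mc(G) = 2`. -/
theorem mc_eq_two_of_md_le_one (G : SimpleGraph V) (hconn : G.Connected)
    (hA : (Aset G).Nonempty) (hmd : md (Gstar G) (DstarSet G) ≤ 1) :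
    mc G = 2 := by
  classical
  obtain ⟨a, haA⟩ := hA
  obtain ⟨u0, hu0D, _⟩ := haA.2
  -- Step 1: extract a matching N of G* covering D*
  have hDadj : ∀ v ∈ DstarSet G, ∃ z, (Gstar G).Adj v z := by
    intro v hv
    have hav : v ≠ a := fun h => haA.1 (h ▸ hv.1)
    obtain ⟨p⟩ := hconn.preconnected v a
    cases p with
    | nil => exact absurd rfl hav
    | cons hadj p' =>
      rename_i z
      by_cases hz : z ∈ Dset G
      · exact absurd (⟨hv.1, hz, hadj⟩ : (indOn G (Dset G)).Adj v z) (hv.2 z)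
      · exact ⟨z, hadj, Or.inr ⟨hv, ⟨hz, v, hv.1, hadj⟩⟩⟩
  have hzex : ∀ v : V, ∃ z, v ∈ DstarSet G → (Gstar G).Adj v z := by
    intro v
    by_cases h : v ∈ DstarSet G
    · obtain ⟨z, hz⟩ := hDadj v h
      exact ⟨z, fun _ => hz⟩
    · exact ⟨v, fun h' => absurd h' h⟩
  choose zf hzf using hzex
  set mdS := {k | ∃ M : Finset (Sym2 V), IsKMatchingDCover (Gstar G) (DstarSet G) k M}
    with hmdS
  have hmdSne : mdS.Nonempty := by
    set s := Finset.univ.filter (fun v : V => v ∈ DstarSet G) with hs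
    refine ⟨s.card, Finset.univ.biUnion (fun i : Fin s.card =>
      {s((s.equivFin.symm i : V), zf (s.equivFin.symm i : V))}), ⟨⟨_, fun i => ?_, rfl⟩, ?_⟩⟩
    · constructor
      · intro e he
        rw [Finset.mem_singleton] at he
        subst he
        have hmem : ((s.equivFin.symm i : V)) ∈ DstarSet G :=
          (Finset.mem_filter.mp (s.equivFin.symm i).2).2
        exact (Gstar G).mem_edgeSet.mpr (hzf _ hmem)
      · intro e he f hf hef
        rw [Finset.mem_singleton] at he hf
        exact absurd (he.trans hf.symm) hef
    · intro v hv
      have hvs : v ∈ s := by rw [hs, Finset.mem_filter]; exact ⟨Finset.mem_univ v, hv⟩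
      refine ⟨s(v, zf v), Finset.mem_biUnion.mpr ⟨s.equivFin ⟨v, hvs⟩, Finset.mem_univ _, ?_⟩,
        Sym2.mem_mk_left v _⟩
      simp
  have hmdmem : md (Gstar G) (DstarSet G) ∈ mdS := Nat.sInf_mem hmdSne
  obtain ⟨Nraw, ⟨fN, hfN, hNeq⟩, hNcov⟩ := hmdmem
  have hNstar : IsMatchingSet (Gstar G) Nraw := by
    rcases Nat.le_one_iff_eq_zero_or_eq_one.mp hmd with h0 | h1
    · rw [hNeq]
      constructor
      · intro e he
        exfalso
        obtain ⟨i, _, _⟩ := Finset.mem_biUnion.mp he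
        have := i.isLt
        omega
      · intro e he
        exfalso
        obtain ⟨i, _, _⟩ := Finset.mem_biUnion.mp he
        have := i.isLt
        omega
    · rw [hNeq]
      have hun : (Finset.univ : Finset (Fin (md (Gstar G) (DstarSet G)))).biUnion fN
          = fN ⟨0, by omega⟩ := by
        apply Finset.ext
        intro e
        rw [Finset.mem_biUnion]
        constructor
        · rintro ⟨i, _, hi⟩
          have : i = ⟨0, by omega⟩ := by
            apply Fin.ext
            have := i.2
            omega
          rwa [← this]
        · intro h
          exact ⟨⟨0, by omega⟩, Finset.mem_univ _, h⟩
      rw [hun]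
      exact hfN _
  have hle : Gstar G ≤ G := fun a b h => h.1
  have hNG : IsMatchingSet G Nraw :=
    ⟨fun e he => SimpleGraph.edgeSet_mono hle (hNstar.1 e he), hNstar.2⟩
  have hNends : ∀ e ∈ Nraw, ∀ x : V, x ∈ e → x ∈ Aset G ∨ x ∈ DstarSet G := by
    intro e he x hx
    obtain ⟨y, rfl⟩ := Sym2.mem_iff_exists.mp hx
    have hadj : (Gstar G).Adj x y := (Gstar G).mem_edgeSet.mp (hNstar.1 _ he)
    rcases hadj.2 with ⟨h1, _⟩ | ⟨h1, _⟩
    · exact Or.inl h1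
    · exact Or.inr h1
  -- Step 2: maximum matching and edges for exposed vertices outside D*
  obtain ⟨M1, hM1⟩ := exists_max_matching G
  have hwex : ∀ u : V, ∃ x,
      (u ∉ edgeCover M1 ∧ u ∉ DstarSet G) → (x ∈ Dset G ∧ x ∉ DstarSet G ∧ G.Adj u x) := by
    intro u
    by_cases h : u ∉ edgeCover M1 ∧ u ∉ DstarSet G
    · have huD : u ∈ Dset G := ⟨M1, hM1, h.1⟩
      have : ¬(u ∈ Dset G ∧ ∀ z : V, ¬ (indOn G (Dset G)).Adj u z) := h.2
      push_neg at this
      obtain ⟨z, hz⟩ := this huD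
      have hzD : z ∈ Dset G := hz.2.1
      have hadj : G.Adj u z := hz.2.2
      refine ⟨z, fun _ => ⟨hzD, ?_, hadj⟩⟩
      intro hzstar
      exact hzstar.2 u ((indOn G (Dset G)).adj_symm hz)
    · exact ⟨u, fun h' => absurd h' h⟩
  choose wf hwf using hwex
  set P := fun u : V => u ∉ edgeCover M1 ∧ u ∉ DstarSet G with hP
  set T := (Finset.univ.filter P).image (fun u => s(u, wf u)) with hT
  set M2 := Nraw ∪ T with hM2def
  have hDA : ∀ x : V, x ∈ Dset G → x ∉ Aset G := fun x hx hax => hax.1 hx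
  have hTvert : ∀ u : V, P u → ∀ x : V, x ∈ s(u, wf u) →
      x ∈ Dset G ∧ x ∉ DstarSet G := by
    intro u hPu x hx
    obtain ⟨h1, h2, h3⟩ := hwf u hPu
    rcases Sym2.mem_iff.mp hx with rfl | rfl
    · exact ⟨⟨M1, hM1, hPu.1⟩, hPu.2⟩
    · exact ⟨h1, h2⟩
  have hM2 : IsMatchingSet G M2 := by
    constructor
    · intro e he
      rcases Finset.mem_union.mp he with he | he
      · exact hNG.1 e he
      · obtain ⟨u, hu, rfl⟩ := Finset.mem_image.mp he
        rw [Finset.mem_filter] at hu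
        exact G.mem_edgeSet.mpr (hwf u hu.2).2.2
    · intro e he f hf hef x hx hxf
      have hcase : ∀ g₁ ∈ Nraw, ∀ g₂ ∈ T, ∀ y : V, y ∈ g₁ → y ∉ g₂ := by
        intro g₁ hg₁ g₂ hg₂ y hy₁ hy₂
        obtain ⟨u, hu, rfl⟩ := Finset.mem_image.mp hg₂
        rw [Finset.mem_filter] at hu
        have h₂ := hTvert u hu.2 y hy₂
        rcases hNends g₁ hg₁ y hy₁ with hyA | hyD
        · exact hDA y h₂.1 hyA
        · exact h₂.2 hyD
      rcases Finset.mem_union.mp he with he | he <;> rcases Finset.mem_union.mp hf with hf | hf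
      · exact hNG.2 e he f hf hef x hx hxf
      · exact hcase e he f hf x hx hxf
      · exact hcase f hf e he x hxf hx
      · obtain ⟨u, hu, rfl⟩ := Finset.mem_image.mp he
        obtain ⟨u', hu', rfl⟩ := Finset.mem_image.mp hf
        rw [Finset.mem_filter] at hu hu'
        have hPu := hu.2
        have hPu' := hu'.2
        have hune : u ≠ u' := by
          rintro rfl
          exact hef rfl
        obtain ⟨hwD, hwDs, hadj⟩ := hwf u hPu
        obtain ⟨hwD', hwDs', hadj'⟩ := hwf u' hPu'
        rcases Sym2.mem_iff.mp hx with rfl | rfl <;> rcases Sym2.mem_iff.mp hxf with h' | h'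
        · exact hune h'
        · subst h'
          exact not_adj_exposed hM1 hPu'.1 hPu.1 hadj'
        · subst h'
          exact not_adj_exposed hM1 hPu.1 hPu'.1 hadj
        · rw [h'] at hadj
          exact key_lemma hM1 hPu.1 hPu'.1 hune hwD' hadj hadj'
  -- Step 3: 2 is in the mc set
  have h2mem : (2 : ℕ) ∈ {k | ∃ M : Finset (Sym2 V), IsKMatchingCover G k M} := by
    refine ⟨M1 ∪ M2, ⟨![M1, M2], ?_, ?_⟩, ?_⟩
    · intro i
      fin_cases i
      · exact hM1.1
      · exact hM2
    · apply Finset.ext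
      intro e
      rw [Finset.mem_biUnion]
      constructor
      · intro h
        rcases Finset.mem_union.mp h with h | h
        · exact ⟨0, Finset.mem_univ _, h⟩
        · exact ⟨1, Finset.mem_univ _, h⟩
      · rintro ⟨i, _, hi⟩
        fin_cases i
        · exact Finset.mem_union_left _ hi
        · exact Finset.mem_union_right _ hi
    · intro x
      by_cases hx : x ∈ edgeCover M1
      · obtain ⟨e, he, hxe⟩ := hx
        exact ⟨e, Finset.mem_union_left _ he, hxe⟩
      · by_cases hxD : x ∈ DstarSet G
        · obtain ⟨e, he, hxe⟩ := hNcov x hxD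
          exact ⟨e, Finset.mem_union_right _ (Finset.mem_union_left _ he), hxe⟩
        · have hxP : P x := ⟨hx, hxD⟩
          refine ⟨s(x, wf x), Finset.mem_union_right _ (Finset.mem_union_right _ ?_),
            Sym2.mem_mk_left _ _⟩
          exact Finset.mem_image.mpr ⟨x, Finset.mem_filter.mpr ⟨Finset.mem_univ x, hxP⟩, rfl⟩
  -- Step 4: lower bound
  have hlow : ∀ k ∈ {k | ∃ M : Finset (Sym2 V), IsKMatchingCover G k M}, 2 ≤ k := by
    intro k hk
    by_contra hlt
    push_neg at hlt
    interval_cases k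
    · obtain ⟨Mt, ⟨f0, _, hMeq⟩, hcov⟩ := hk
      obtain ⟨e, he, _⟩ := hcov a
      rw [hMeq] at he
      simp at he
    · obtain ⟨Mt, ⟨f0, hf0, hMeq⟩, hcov⟩ := hk
      have hMt : IsMatchingSet G Mt := by
        have hun : Mt = f0 0 := by
          rw [hMeq]
          apply Finset.ext
          intro e
          rw [Finset.mem_biUnion]
          constructor
          · rintro ⟨i, _, hi⟩
            rwa [Subsingleton.elim i 0] at hi
          · intro h
            exact ⟨0, Finset.mem_univ _, h⟩
        rw [hun]
        exact hf0 0
      have hcc := cover_card (M := Mt) (G := G) hMt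
      have hfu : Finset.univ.filter (fun v : V => v ∈ edgeCover Mt) = Finset.univ := by
        apply Finset.ext
        intro v
        simp only [Finset.mem_filter, Finset.mem_univ, true_and]
        exact ⟨fun _ => trivial, fun _ => hcov v⟩
      rw [hfu] at hcc
      obtain ⟨M'', hM''max, hu''⟩ := hu0D
      have hle2 := hM''max.2 Mt hMt
      have hcc2 := cover_card (M := M'') (G := G) hM''max.1
      have hsub : Finset.univ.filter (fun v : V => v ∈ edgeCover M'') ⊆
          Finset.univ.erase u0 := by
        intro v hv
        rw [Finset.mem_filter] at hv
        refine Finset.mem_erase.mpr ⟨?_, Finset.mem_univ v⟩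
        rintro rfl
        exact hu'' hv.2
      have hcard3 := Finset.card_le_card hsub
      rw [Finset.card_erase_of_mem (Finset.mem_univ u0)] at hcard3
      have hpos : 0 < Finset.univ.card := Finset.card_pos.mpr ⟨a, Finset.mem_univ a⟩
      rw [hcc2] at hcard3
      omega
  exact le_antisymm (Nat.sInf_le h2mem) (le_csInf ⟨2, h2mem⟩ hlow)
end

section
/- Let G be a finite simple connected graph with A(G) ≠ ∅. Then mc(G) ≥ md(G*). -/
variable {V : Type*}

variable [Fintype V] [DecidableEq V]

/-- If `A(G) ≠ ∅`, then `mc(G) ≥ md(G*)`. -/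
theorem md_le_mc (G : SimpleGraph V) (hconn : G.Connected)
    (hA : (Aset G).Nonempty) :
    md (Gstar G) (DstarSet G) ≤ mc G := by
  classical
  obtain ⟨a, -, u, -, hadj⟩ := hA
  have hnbr : ∀ v : V, ∃ w, G.Adj v w := by
    intro v
    rcases eq_or_ne v u with rfl | hvu
    · exact ⟨a, hadj⟩
    · obtain ⟨p⟩ := hconn v u
      cases p with
      | nil => exact absurd rfl hvu
      | cons h _ => exact ⟨_, h⟩
  choose nb hnb using hnbr
  have hne : {k | ∃ M : Finset (Sym2 V), IsKMatchingCover G k M}.Nonempty := by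
    refine ⟨Fintype.card V, ?_⟩
    set g : Fin (Fintype.card V) → V := fun i => (Fintype.equivFin V).symm i
    refine ⟨_, ⟨fun i => {s(g i, nb (g i))}, fun i => ⟨?_, ?_⟩, rfl⟩, ?_⟩
    · intro e he
      rw [Finset.mem_singleton] at he
      subst he
      exact hnb (g i)
    · intro e he f hf hef
      rw [Finset.mem_singleton] at he hf
      exact absurd (he.trans hf.symm) hef
    · intro v
      refine ⟨s(v, nb v), ?_, Sym2.mem_mk_left _ _⟩
      refine Finset.mem_biUnion.mpr ⟨Fintype.equivFin V v, Finset.mem_univ _, ?_⟩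
      simp [g]
  have hmem : mc G ∈ {k | ∃ M : Finset (Sym2 V), IsKMatchingCover G k M} :=
    Nat.sInf_mem hne
  obtain ⟨M, ⟨f, hf, rfl⟩, hcov⟩ := hmem
  refine Nat.sInf_le ?_
  refine ⟨Finset.univ.biUnion fun i =>
    (f i).filter (fun e => e ∈ (Gstar G).edgeSet), ⟨⟨_, fun i => ⟨?_, ?_⟩, rfl⟩, ?_⟩⟩
  · intro e he
    exact (Finset.mem_filter.mp he).2
  · intro e he f' hf' hef v hve
    exact (hf i).2 e (Finset.mem_filter.mp he).1 f' (Finset.mem_filter.mp hf').1 hef v hve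
  · intro v hv
    obtain ⟨e, heM, hve⟩ := hcov v
    obtain ⟨i, -, hei⟩ := Finset.mem_biUnion.mp heM
    obtain ⟨u', rfl⟩ : ∃ b, e = s(v, b) := (Sym2.mem_iff_exists).mp hve
    have hvu' : G.Adj v u' := (hf i).1 _ hei
    obtain ⟨hvD, hiso⟩ := hv
    have hu'notD : u' ∉ Dset G := fun h => hiso u' ⟨hvD, h, hvu'⟩
    have hu'A : u' ∈ Aset G := ⟨hu'notD, v, hvD, hvu'⟩
    have hstar : (Gstar G).Adj v u' := ⟨hvu', Or.inr ⟨⟨hvD, hiso⟩, hu'A⟩⟩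
    refine ⟨s(v, u'), Finset.mem_biUnion.mpr ⟨i, Finset.mem_univ _,
      Finset.mem_filter.mpr ⟨hei, hstar⟩⟩, Sym2.mem_mk_left _ _⟩
end

section
/- Let G be a finite simple connected graph with A(G) ≠ ∅ (hence D(G) ≠ ∅). Then every maximum matching of G covers all vertices of A(G) ∪ C(G), and for each connected component of the induced subgraph G[D(G)] at most one vertex of that component is not covered by the maximum matching. -/
variable {V : Type*}

variable [Fintype V] [DecidableEq V]

section Aux

variable (G : SimpleGraph V)

private lemma addEdge_contra (M : Finset (Sym2 V)) (hM : IsMaximumMatchingSet G M)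
    (u x : V) (hadj : G.Adj u x) (hu : u ∉ edgeCover M) (hx : x ∉ edgeCover M) : False := by
  classical
  have hne : s(u, x) ∉ M := fun h => hu ⟨s(u, x), h, Sym2.mem_mk_left _ _⟩
  have hmatch : IsMatchingSet G (insert s(u, x) M) := by
    refine ⟨?_, ?_⟩
    · intro e he
      rcases Finset.mem_insert.mp he with rfl | heM
      · exact (G.mem_edgeSet).mpr hadj
      · exact hM.1.1 e heM
    · intro e he f hf hef v hve hvf
      rcases Finset.mem_insert.mp he with rfl | heM
      · rcases Finset.mem_insert.mp hf with rfl | hfM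
        · exact hef rfl
        · rcases Sym2.mem_iff.mp hve with rfl | rfl
          · exact hu ⟨f, hfM, hvf⟩
          · exact hx ⟨f, hfM, hvf⟩
      · rcases Finset.mem_insert.mp hf with rfl | hfM
        · rcases Sym2.mem_iff.mp hvf with rfl | rfl
          · exact hu ⟨e, heM, hve⟩
          · exact hx ⟨e, heM, hve⟩
        · exact hM.1.2 e heM f hfM hef v hve hvf
  have := hM.2 _ hmatch
  rw [Finset.card_insert_of_notMem hne] at this
  omega

private lemma stepSwap (M : Finset (Sym2 V)) (hM : IsMaximumMatchingSet G M)
    (w w1 w2 : V) (he : s(w, w1) ∈ M) (hf : G.Adj w1 w2)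
    (hw2 : w2 ∉ edgeCover M) (hw2w : w2 ≠ w) :
    IsMaximumMatchingSet G (insert s(w1, w2) (M.erase s(w, w1))) ∧
      ∀ v, v ∉ edgeCover (insert s(w1, w2) (M.erase s(w, w1))) ↔
        (v ∉ edgeCover M ∧ v ≠ w2) ∨ v = w := by
  classical
  have hww1 : G.Adj w w1 := (G.mem_edgeSet).mp (hM.1.1 _ he)
  have hfM : s(w1, w2) ∉ M := fun h => hw2 ⟨_, h, Sym2.mem_mk_right _ _⟩
  have hwM : w ∈ edgeCover M := ⟨_, he, Sym2.mem_mk_left _ _⟩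
  have huniq : ∀ v, v ∈ (s(w, w1) : Sym2 V) → ∀ e ∈ M, e ≠ s(w, w1) → v ∉ e := by
    intro v hv e heM hne
    exact hM.1.2 _ he _ heM (Ne.symm hne) v hv
  have hmatch : IsMatchingSet G (insert s(w1, w2) (M.erase s(w, w1))) := by
    refine ⟨?_, ?_⟩
    · intro e hee
      rcases Finset.mem_insert.mp hee with rfl | hh
      · exact (G.mem_edgeSet).mpr hf
      · exact hM.1.1 _ (Finset.mem_of_mem_erase hh)
    · intro e hee f hff hef v hve hvf
      rcases Finset.mem_insert.mp hee with rfl | hh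
      · rcases Finset.mem_insert.mp hff with rfl | hh'
        · exact hef rfl
        · rcases Sym2.mem_iff.mp hve with rfl | rfl
          · exact huniq v (Sym2.mem_mk_right _ _) f (Finset.mem_of_mem_erase hh')
              (Finset.ne_of_mem_erase hh') hvf
          · exact hw2 ⟨f, Finset.mem_of_mem_erase hh', hvf⟩
      · rcases Finset.mem_insert.mp hff with rfl | hh'
        · rcases Sym2.mem_iff.mp hvf with rfl | rfl
          · exact huniq v (Sym2.mem_mk_right _ _) e (Finset.mem_of_mem_erase hh)
              (Finset.ne_of_mem_erase hh) hve
          · exact hw2 ⟨e, Finset.mem_of_mem_erase hh, hve⟩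
        · exact hM.1.2 e (Finset.mem_of_mem_erase hh) f (Finset.mem_of_mem_erase hh') hef v hve hvf
  have hf1ne : s(w1, w2) ∉ M.erase s(w, w1) := fun h => hfM (Finset.mem_of_mem_erase h)
  have hcard : (insert s(w1, w2) (M.erase s(w, w1))).card = M.card := by
    rw [Finset.card_insert_of_notMem hf1ne, Finset.card_erase_of_mem he]
    exact Nat.succ_pred_eq_of_pos (Finset.card_pos.mpr ⟨_, he⟩)
  have hcov : ∀ v, v ∈ edgeCover (insert s(w1, w2) (M.erase s(w, w1))) ↔
      (v ∈ edgeCover M ∧ v ≠ w) ∨ v = w2 := by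
    intro v
    constructor
    · rintro ⟨e, hee, hve⟩
      rcases Finset.mem_insert.mp hee with rfl | hh
      · rcases Sym2.mem_iff.mp hve with rfl | rfl
        · exact Or.inl ⟨⟨_, he, Sym2.mem_mk_right _ _⟩, hww1.ne'⟩
        · exact Or.inr rfl
      · refine Or.inl ⟨⟨e, Finset.mem_of_mem_erase hh, hve⟩, ?_⟩
        rintro rfl
        exact huniq v (Sym2.mem_mk_left _ _) e (Finset.mem_of_mem_erase hh)
          (Finset.ne_of_mem_erase hh) hve
    · rintro (⟨⟨e, heM, hve⟩, hvw⟩ | hv2)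
      · by_cases hee : e = s(w, w1)
        · subst hee
          rcases Sym2.mem_iff.mp hve with h | h
          · exact absurd h hvw
          · exact ⟨s(w1, w2), Finset.mem_insert_self _ _, by rw [h]; exact Sym2.mem_mk_left _ _⟩
        · exact ⟨e, Finset.mem_insert_of_mem (Finset.mem_erase.mpr ⟨hee, heM⟩), hve⟩
      · exact ⟨s(w1, w2), Finset.mem_insert_self _ _, by rw [hv2]; exact Sym2.mem_mk_right _ _⟩
  refine ⟨⟨hmatch, fun N hN => (hM.2 N hN).trans_eq hcard.symm⟩, ?_⟩
  intro v
  have h1 := hcov v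
  by_cases hv2 : v = w2
  · subst hv2; tauto
  · tauto

private lemma swapLemma : ∀ (n : ℕ) (M N : Finset (Sym2 V)), (M \ N).card = n →
    IsMaximumMatchingSet G M → IsMaximumMatchingSet G N →
    ∀ w, w ∈ edgeCover M → w ∉ edgeCover N →
    ∃ M' z, IsMaximumMatchingSet G M' ∧ z ∉ edgeCover M ∧
      (∀ v, v ∉ edgeCover M' ↔ (v ∉ edgeCover M ∧ v ≠ z) ∨ v = w) ∧
      (∀ e, e ∈ M → e ∈ N → e ∈ M') ∧ (∀ e ∈ M', e ∈ M ∨ e ∈ N) := by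
  classical
  intro n
  induction n using Nat.strong_induction_on with
  | _ n ih =>
  intro M N hn hM hN w hwM hwN
  obtain ⟨e1, he1, hwe1⟩ := hwM
  obtain ⟨w1, rfl⟩ := Sym2.mem_iff_exists.mp hwe1
  have hadj1 : G.Adj w w1 := (G.mem_edgeSet).mp (hM.1.1 _ he1)
  have he1N : s(w, w1) ∉ N := fun h => hwN ⟨_, h, Sym2.mem_mk_left _ _⟩
  by_cases hw1N : w1 ∈ edgeCover N
  · obtain ⟨f1, hf1, hw1f1⟩ := hw1N
    obtain ⟨w2, rfl⟩ := Sym2.mem_iff_exists.mp hw1f1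
    have hadj2 : G.Adj w1 w2 := (G.mem_edgeSet).mp (hN.1.1 _ hf1)
    have hw2w : w2 ≠ w := by
      rintro rfl
      exact hwN ⟨s(w1, w2), hf1, Sym2.mem_mk_right _ _⟩
    have hne1f1 : s(w, w1) ≠ s(w1, w2) := by
      intro h
      have : w ∈ (s(w1, w2) : Sym2 V) := h ▸ Sym2.mem_mk_left _ _
      rcases Sym2.mem_iff.mp this with rfl | rfl
      · exact hadj1.ne rfl
      · exact hw2w rfl
    have hf1M : s(w1, w2) ∉ M := by
      intro h
      exact hM.1.2 _ he1 _ h hne1f1 w1 (Sym2.mem_mk_right _ _) (Sym2.mem_mk_left _ _)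
    by_cases hw2M : w2 ∈ edgeCover M
    · -- recursive case
      have hstep := stepSwap G N hN w2 w1 w (by rw [Sym2.eq_swap]; exact hf1) hadj1.symm hwN hw2w.symm
      rw [show (s(w1, w) : Sym2 V) = s(w, w1) from Sym2.eq_swap,
        show (s(w2, w1) : Sym2 V) = s(w1, w2) from Sym2.eq_swap] at hstep
      set N1 := insert s(w, w1) (N.erase s(w1, w2)) with hN1def
      obtain ⟨hN1max, hN1iff⟩ := hstep
      have hw2N1 : w2 ∉ edgeCover N1 := (hN1iff w2).mpr (Or.inr rfl)
      have hsdiff : M \ N1 = (M \ N).erase s(w, w1) := by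
        ext e
        constructor
        · intro hmem
          rw [Finset.mem_sdiff] at hmem
          obtain ⟨heM, hnN1⟩ := hmem
          rw [hN1def, Finset.mem_insert, not_or, Finset.mem_erase, not_and_or] at hnN1
          obtain ⟨hne, h2⟩ := hnN1
          rw [Finset.mem_erase, Finset.mem_sdiff]
          refine ⟨hne, heM, ?_⟩
          rcases h2 with h | h
          · push_neg at h
            exact fun _ => hf1M (h ▸ heM)
          · exact h
        · intro hmem
          rw [Finset.mem_erase, Finset.mem_sdiff] at hmem
          obtain ⟨hne, heM, heN⟩ := hmem
          rw [Finset.mem_sdiff, hN1def]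
          refine ⟨heM, ?_⟩
          rw [Finset.mem_insert, not_or, Finset.mem_erase]
          exact ⟨hne, fun h => heN h.2⟩
      have he1MN : s(w, w1) ∈ M \ N := Finset.mem_sdiff.mpr ⟨he1, he1N⟩
      have hnpos : 0 < n := hn ▸ Finset.card_pos.mpr ⟨_, he1MN⟩
      have hcard1 : (M \ N1).card = n - 1 := by
        rw [hsdiff, Finset.card_erase_of_mem he1MN, hn]
      obtain ⟨M1, z, hM1max, hzM, hiff1, hincl1, hincl2⟩ :=
        ih (n - 1) (Nat.sub_lt hnpos one_pos) M N1 hcard1 hM hN1max w2 hw2M hw2N1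
      have he1M1 : s(w, w1) ∈ M1 :=
        hincl1 _ he1 (Finset.mem_insert_self _ _)
      have hf1N1 : s(w1, w2) ∉ N1 := by
        rw [hN1def, Finset.mem_insert]
        rintro (h | h)
        · exact hne1f1 h.symm
        · exact (Finset.ne_of_mem_erase h) rfl
      have hf1M1 : s(w1, w2) ∉ M1 := by
        intro h
        rcases hincl2 _ h with h' | h'
        · exact hf1M h'
        · exact hf1N1 h'
      have hw2M1 : w2 ∉ edgeCover M1 := (hiff1 w2).mpr (Or.inr rfl)
      obtain ⟨hMsmax, hMsiff⟩ := stepSwap G M1 hM1max w w1 w2 he1M1 hadj2 hw2M1 hw2w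
      refine ⟨insert s(w1, w2) (M1.erase s(w, w1)), z, hMsmax, hzM, ?_, ?_, ?_⟩
      · intro v
        have h1 := hiff1 v
        have h2 := hMsiff v
        by_cases hv2 : v = w2
        · rw [hv2] at h1 h2 ⊢
          have h3 : w2 ∈ edgeCover M := hw2M
          tauto
        · tauto
      · intro e heM heN
        have hee1 : e ≠ s(w, w1) := fun h => he1N (h ▸ heN)
        have heef1 : e ≠ s(w1, w2) := fun h => hf1M (h ▸ heM)
        have heN1 : e ∈ N1 := by
          rw [hN1def]
          exact Finset.mem_insert_of_mem (Finset.mem_erase.mpr ⟨heef1, heN⟩)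
        exact Finset.mem_insert_of_mem (Finset.mem_erase.mpr ⟨hee1, hincl1 _ heM heN1⟩)
      · intro e hee
        rcases Finset.mem_insert.mp hee with rfl | hh
        · exact Or.inr hf1
        · have heM1 : e ∈ M1 := Finset.mem_of_mem_erase hh
          rcases hincl2 _ heM1 with h' | h'
          · exact Or.inl h'
          · rw [hN1def, Finset.mem_insert] at h'
            rcases h' with h'' | h''
            · exact absurd h'' (Finset.ne_of_mem_erase hh)
            · exact Or.inr (Finset.mem_of_mem_erase h'')
    · -- base case
      obtain ⟨hMsmax, hMsiff⟩ := stepSwap G M hM w w1 w2 he1 hadj2 hw2M hw2w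
      refine ⟨insert s(w1, w2) (M.erase s(w, w1)), w2, hMsmax, hw2M, hMsiff, ?_, ?_⟩
      · intro e heM heN
        have hee1 : e ≠ s(w, w1) := fun h => he1N (h ▸ heN)
        exact Finset.mem_insert_of_mem (Finset.mem_erase.mpr ⟨hee1, heM⟩)
      · intro e hee
        rcases Finset.mem_insert.mp hee with rfl | hh
        · exact Or.inr hf1
        · exact Or.inl (Finset.mem_of_mem_erase hh)
  · exact absurd (addEdge_contra G N hN w w1 hadj1 hwN hw1N) not_false

private lemma keyWalk : ∀ {u x : V}, (indOn G (Dset G)).Walk u x →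
    ∀ M, IsMaximumMatchingSet G M → u ∉ edgeCover M → x ∉ edgeCover M → u = x := by
  classical
  intro u x W
  induction W with
  | nil => intro M _ _ _; rfl
  | @cons u b x h W ihW =>
    intro M hM hu hx
    obtain ⟨huD, hbD, hGadj⟩ := h
    by_cases hbM : b ∈ edgeCover M
    · obtain ⟨N, hNmax, hbN⟩ := hbD
      obtain ⟨M', z, hM', hz, hiff, -, -⟩ :=
        swapLemma G ((M \ N).card) M N rfl hM hNmax b hbM hbN
      have hbM' : b ∉ edgeCover M' := (hiff b).mpr (Or.inr rfl)
      by_cases huz : u = z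
      · by_cases hux : u = x
        · exact hux
        · have hxM' : x ∉ edgeCover M' :=
            (hiff x).mpr (Or.inl ⟨hx, fun hh => hux (huz.trans hh.symm)⟩)
          have hbx : b = x := ihW M' hM' hbM' hxM'
          exact absurd (addEdge_contra G M hM u x (hbx ▸ hGadj) hu hx) not_false
      · have huM' : u ∉ edgeCover M' := (hiff u).mpr (Or.inl ⟨hu, huz⟩)
        exact absurd (addEdge_contra G M' hM' u b hGadj huM' hbM') not_false
    · exact absurd (addEdge_contra G M hM u b hGadj hu hbM) not_false

end Aux

/-- if `A(G) ≠ ∅`, every maximum matching of `G` covers `A(G) ∪ C(G)`, and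
misses at most one vertex of each connected component of `G[D(G)]`. -/
theorem maximum_matching_covers_A_and_C (G : SimpleGraph V) (hconn : G.Connected)
    (hA : (Aset G).Nonempty)
    (M : Finset (Sym2 V)) (hM : IsMaximumMatchingSet G M) :
    (∀ v : V, v ∈ Aset G ∪ Cset G → v ∈ edgeCover M) ∧
    ∀ u ∈ Dset G, ∀ x ∈ Dset G, (indOn G (Dset G)).Reachable u x →
      u ∉ edgeCover M → x ∉ edgeCover M → u = x := by
  constructor
  · intro v hv
    by_contra hvM
    have hvD : v ∈ Dset G := ⟨M, hM, hvM⟩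
    rcases hv with h | h
    · exact h.1 hvD
    · exact h.1 hvD
  · intro u hu x hx hreach huM hxM
    obtain ⟨W⟩ := hreach
    exact keyWalk G W M hM huM hxM
end
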